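/- Let D be an n-run OofA design on m components with n ≥ 2 such that C_1(D) = 0 and C_2(D) = 0 (in particular, this holds for any order-of-addition orthogonal array of strength 2). Then k_{m2}(D) = n m(m−1)(9m² − 5m + 10) / (144(n−1)). -/

import Mathlib

/-- A run (addition order) on `m` components: position `r` receives component `x r`.
The position map `π_x` is `x.symm`. -/
abbrev Run (m : ℕ) := Equiv.Perm (Fin m)

/-- Kendall tau distance between two runs. -/
def kendall {m : ℕ} (x y : Run m) : ℕ :=
  (Finset.univ.filter fun p : Fin m × Fin m =>
    p.1 < p.2 ∧
      (((x.symm p.1 : ℕ) : ℤ) - ((x.symm p.2 : ℕ) : ℤ)) *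
        (((y.symm p.1 : ℕ) : ℤ) - ((y.symm p.2 : ℕ) : ℤ)) < 0).card

/-- Average pairwise Kendall tau distance of an `n`-run design. -/
noncomputable def kave {m n : ℕ} (D : Fin n → Run m) : ℝ :=
  (∑ p ∈ Finset.univ.filter (fun p : Fin n × Fin n => p.1 < p.2),
      (kendall (D p.1) (D p.2) : ℝ)) / (n.choose 2 : ℝ)

/-- Second moment of the pairwise Kendall tau distances of an `n`-run design. -/
noncomputable def km2 {m n : ℕ} (D : Fin n → Run m) : ℝ :=
  (∑ p ∈ Finset.univ.filter (fun p : Fin n × Fin n => p.1 < p.2),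
      (kendall (D p.1) (D p.2) : ℝ) ^ 2) / (n.choose 2 : ℝ)

/-- The PWO factor `z_ab(x)` as a real number. -/
def zab {m : ℕ} (x : Run m) (p : Fin m × Fin m) : ℝ :=
  if x.symm p.1 < x.symm p.2 then 1 else -1

/-- The set `Q` of ordered component pairs `(a,b)` with `a < b`. -/
def pairsQ (m : ℕ) : Finset (Fin m × Fin m) :=
  Finset.univ.filter fun p => p.1 < p.2

/-- The `J`-characteristic `J_W(D) = Σ_{x ∈ D} Π_{(a,b) ∈ W} z_ab(x)`. -/
noncomputable def Jchar {m : ℕ} {ι : Type} [Fintype ι] (D : ι → Run m)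
    (W : Finset (Fin m × Fin m)) : ℝ :=
  ∑ i, ∏ p ∈ W, zab (D i) p

/-- The centralized generalized wordlength pattern
`C_a(D) = Σ_{W ⊆ Q, |W| = a} (J_W(D)/n − J_W(D_full)/m!)²`,
where the full design consists of all `m!` permutations. -/
noncomputable def Cwlp {m n : ℕ} (D : Fin n → Run m) (a : ℕ) : ℝ :=
  ∑ W ∈ (pairsQ m).powersetCard a,
    (Jchar D W / (n : ℝ) - Jchar (fun σ : Run m => σ) W / (Nat.factorial m : ℝ)) ^ 2

/-! Write `N = binom(m,2)` and `S(x, y) = Σ_{p ∈ Q} z_p(x) z_p(y)`, so that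
`k(x, y) = (N - S(x, y))/2`. Then `k_{m2}(D)` is determined by
`Σ_{i,j} S(x_i, x_j) = Σ_p J_{p}(D)²` and `Σ_{i,j} S(x_i, x_j)² = Σ_{p,q} (Σ_i z_p(x_i) z_q(x_i))²`.
The conditions `C₁ = C₂ = 0` say that the first- and second-order `J`-characteristics of `D` are
`n/m!` times those of the full design. On the full design, relabelling the components shows that
`J_{p}` vanishes, that `J_{p,q}` vanishes for disjoint pairs, and that it is `± m!/3` for pairs
sharing one component: among three components exactly two are extreme in any order, whence
`z_ab z_ac + z_ba z_bc + z_ca z_cb = 1`. -/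

open Finset

section Runs
variable {m : ℕ}

lemma zab_mul_self (x : Run m) (p : Fin m × Fin m) : zab x p * zab x p = 1 := by
  unfold zab; split_ifs <;> norm_num

lemma zab_diag (x : Run m) (c : Fin m) : zab x (c, c) = -1 :=
  if_neg (lt_irrefl _)

lemma zab_swap (x : Run m) {a b : Fin m} (hab : a ≠ b) : zab x (b, a) = -zab x (a, b) := by
  have hne : x.symm a ≠ x.symm b := x.symm.injective.ne hab
  unfold zab
  rcases hne.lt_or_gt with h | h
  · simp [h, h.not_gt]
  · simp [h, h.not_gt]

lemma zab_inv_mul (π x : Run m) (a b : Fin m) : zab (π⁻¹ * x) (a, b) = zab x (π a, π b) := by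
  rw [zab, zab, ← Equiv.Perm.inv_def, mul_inv_rev, inv_inv, Equiv.Perm.mul_apply,
    Equiv.Perm.mul_apply, Equiv.Perm.inv_def]

lemma zab_triangle (x : Run m) {a b c : Fin m} (hab : a ≠ b) (hac : a ≠ c) (hbc : b ≠ c) :
    zab x (a, b) * zab x (a, c) + zab x (b, a) * zab x (b, c) + zab x (c, a) * zab x (c, b)
      = 1 := by
  have h1 := Fin.val_ne_of_ne (x.symm.injective.ne hab)
  have h2 := Fin.val_ne_of_ne (x.symm.injective.ne hac)
  have h3 := Fin.val_ne_of_ne (x.symm.injective.ne hbc)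
  unfold zab
  simp only [Fin.lt_def]
  split_ifs <;> first | (exfalso; omega) | norm_num

lemma kendall_eq_sum (x y : Run m) :
    (kendall x y : ℝ) = ∑ p ∈ pairsQ m, (1 - zab x p * zab y p) / 2 := by
  rw [kendall, ← filter_filter, ← pairsQ, card_filter, Nat.cast_sum]
  refine sum_congr rfl fun p hp => ?_
  have hne : p.1 ≠ p.2 := (mem_filter.1 hp).2.ne
  have h1 := Fin.val_ne_of_ne (x.symm.injective.ne hne)
  have h2 := Fin.val_ne_of_ne (y.symm.injective.ne hne)
  unfold zab
  simp only [Fin.lt_def, mul_neg_iff, sub_pos, sub_neg, Nat.cast_lt]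
  split_ifs <;> first | (exfalso; omega) | norm_num

end Runs

lemma two_mul_sum_filter_lt {α : Type*} [Fintype α] [LinearOrder α] (g : α → α → ℝ)
    (hg : ∀ a b, g a b = g b a) :
    2 * ∑ p ∈ univ.filter (fun p : α × α => p.1 < p.2), g p.1 p.2
      = ∑ a, ∑ b, g a b - ∑ a, g a a := by
  have hsplit : ∀ p : α × α, g p.1 p.2 = (if p.1 < p.2 then g p.1 p.2 else 0)
      + (if p.2 < p.1 then g p.1 p.2 else 0) + (if p.1 = p.2 then g p.1 p.2 else 0) := by
    intro p
    rcases lt_trichotomy p.1 p.2 with h | h | h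
    · simp [h, h.not_gt, h.ne]
    · simp [h]
    · simp [h, h.not_gt, h.ne']
  have hswap : ∑ p : α × α, (if p.2 < p.1 then g p.1 p.2 else 0)
      = ∑ p : α × α, (if p.1 < p.2 then g p.1 p.2 else 0) :=
    Fintype.sum_equiv (Equiv.prodComm α α) _ _ fun p => by rw [hg]; rfl
  have hdiag : ∑ p : α × α, (if p.1 = p.2 then g p.1 p.2 else 0) = ∑ a, g a a := by
    simp [Fintype.sum_prod_type]
  rw [sum_filter, ← Fintype.sum_prod_type']
  conv_rhs => rw [sum_congr rfl fun p _ => hsplit p, sum_add_distrib, sum_add_distrib,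
    hswap, hdiag]
  ring

lemma Finset.sum_univ_eq_add_add_sum_compl {α : Type*} [Fintype α] [DecidableEq α] {a b : α}
    (hab : a ≠ b) (f : α → ℝ) : ∑ c, f c = f a + f b + ∑ c ∈ ({a, b} : Finset α)ᶜ, f c := by
  rw [← sum_add_sum_compl {a, b}, sum_pair hab]

lemma cast_card_compl_pair {α : Type*} [Fintype α] [DecidableEq α] {a b : α} (hab : a ≠ b) :
    (({a, b} : Finset α)ᶜ.card : ℝ) = Fintype.card α - 2 := by
  have h := card_compl_add_card ({a, b} : Finset α)
  rw [card_pair hab] at h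
  rw [← h]
  push_cast
  ring

lemma sum_sum_sum_mul_eq_sum_sq {ι κ : Type*} [Fintype ι] (s : Finset κ) (u : ι → κ → ℝ) :
    ∑ i, ∑ j, ∑ k ∈ s, u i k * u j k = ∑ k ∈ s, (∑ i, u i k) ^ 2 := by
  simp_rw [sq, sum_mul_sum]
  conv_rhs => rw [sum_comm]
  exact sum_congr rfl fun i _ => sum_comm

lemma sum_sum_sq_sum_mul_eq {ι κ : Type*} [Fintype ι] (s : Finset κ) (u : ι → κ → ℝ) :
    ∑ i, ∑ j, (∑ k ∈ s, u i k * u j k) ^ 2 = ∑ k ∈ s, ∑ l ∈ s, (∑ i, u i k * u i l) ^ 2 := by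
  have h := sum_sum_sum_mul_eq_sum_sq (s ×ˢ s) (fun i kl => u i kl.1 * u i kl.2)
  rw [sum_product] at h
  rw [← h]
  refine sum_congr rfl fun i _ => sum_congr rfl fun j _ => ?_
  rw [sq, sum_mul_sum, sum_product]
  refine sum_congr rfl fun k _ => sum_congr rfl fun l _ => ?_
  ring

section PairCorrelation
variable {m : ℕ}

/-- For `p ≠ q` this is the `J`-characteristic `J_{p,q}(D)`. -/
def pairCorr {ι : Type} [Fintype ι] (D : ι → Run m) (p q : Fin m × Fin m) : ℝ :=
  ∑ i, zab (D i) p * zab (D i) q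

lemma pairCorr_self {ι : Type} [Fintype ι] (D : ι → Run m) (p : Fin m × Fin m) :
    pairCorr D p p = Fintype.card ι := by
  simp [pairCorr, zab_mul_self]

lemma pairCorr_swap_left {ι : Type} [Fintype ι] (D : ι → Run m) {a b : Fin m} (hab : a ≠ b)
    (q : Fin m × Fin m) : pairCorr D (b, a) q = -pairCorr D (a, b) q := by
  simp [pairCorr, zab_swap _ hab]

lemma pairCorr_swap_right {ι : Type} [Fintype ι] (D : ι → Run m) (p : Fin m × Fin m)
    {c d : Fin m} (hcd : c ≠ d) : pairCorr D p (d, c) = -pairCorr D p (c, d) := by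
  simp [pairCorr, zab_swap _ hcd]

lemma sq_pairCorr_swap_right {ι : Type} [Fintype ι] (D : ι → Run m) (p : Fin m × Fin m)
    (c d : Fin m) : pairCorr D p (d, c) ^ 2 = pairCorr D p (c, d) ^ 2 := by
  rcases eq_or_ne c d with rfl | hcd
  · rfl
  · rw [pairCorr_swap_right D p hcd, neg_sq]

end PairCorrelation

local notation "Φ" => pairCorr (fun σ : Run _ => σ)

section FullDesign
variable {m : ℕ}

lemma sum_zab_perm_relabel (π : Run m) (F : (Fin m × Fin m → ℝ) → ℝ) :
    ∑ σ : Run m, F (fun p => zab σ (π p.1, π p.2)) = ∑ σ : Run m, F (zab σ) := by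
  simp_rw [← zab_inv_mul]
  exact Equiv.sum_comp (Equiv.mulLeft π⁻¹) (fun σ => F (zab σ))

lemma sum_zab_full {a b : Fin m} (hab : a ≠ b) : ∑ σ : Run m, zab σ (a, b) = 0 := by
  have h := sum_zab_perm_relabel (Equiv.swap a b) (fun z => z (a, b))
  simp only [Equiv.swap_apply_left, Equiv.swap_apply_right, zab_swap _ hab, sum_neg_distrib] at h
  linarith

lemma pairCorr_full_of_disjoint {a b c d : Fin m} (hab : a ≠ b) (hca : c ≠ a) (hcb : c ≠ b)
    (hda : d ≠ a) (hdb : d ≠ b) : Φ (a, b) (c, d) = 0 := by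
  have h := sum_zab_perm_relabel (Equiv.swap a b) (fun z => z (a, b) * z (c, d))
  simp only [Equiv.swap_apply_left, Equiv.swap_apply_right, Equiv.swap_apply_of_ne_of_ne hca hcb,
    Equiv.swap_apply_of_ne_of_ne hda hdb, zab_swap _ hab, neg_mul, sum_neg_distrib] at h
  rw [pairCorr]
  linarith

lemma pairCorr_full_of_common {a b c : Fin m} (hab : a ≠ b) (hac : a ≠ c) (hbc : b ≠ c) :
    Φ (a, b) (a, c) = (m.factorial : ℝ) / 3 := by
  have hba := sum_zab_perm_relabel (Equiv.swap a b) (fun z => z (a, b) * z (a, c))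
  have hca := sum_zab_perm_relabel (Equiv.swap a c) (fun z => z (a, b) * z (a, c))
  simp only [Equiv.swap_apply_left, Equiv.swap_apply_right,
    Equiv.swap_apply_of_ne_of_ne hac.symm hbc.symm, Equiv.swap_apply_of_ne_of_ne hab.symm hbc]
    at hba hca
  have hca' : ∑ σ : Run m, zab σ (c, a) * zab σ (c, b)
      = ∑ σ : Run m, zab σ (a, b) * zab σ (a, c) := by
    rw [← hca]; exact sum_congr rfl fun σ _ => mul_comm _ _
  have htri : ∑ σ : Run m, (zab σ (a, b) * zab σ (a, c) + zab σ (b, a) * zab σ (b, c)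
      + zab σ (c, a) * zab σ (c, b)) = m.factorial := by
    simp [zab_triangle _ hab hac hbc, Fintype.card_perm]
  rw [sum_add_distrib, sum_add_distrib, hba, hca'] at htri
  rw [pairCorr]
  linarith

lemma pairCorr_full_diag {a b : Fin m} (hab : a ≠ b) (c : Fin m) :
    Φ (a, b) (c, c) = 0 := by
  simp [pairCorr, zab_diag, sum_zab_full hab]

/-- The ordered pairs `(a, b)` and `(b, a)` contribute `m!²` each, and each of the `4(m-2)` ordered
pairs sharing exactly one component with `(a, b)` contributes `(m!/3)²`. -/
lemma sum_sum_sq_pairCorr_full {a b : Fin m} (hab : a ≠ b) :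
    ∑ c, ∑ d, Φ (a, b) (c, d) ^ 2 = 2 * (m.factorial : ℝ) ^ 2 * (2 * m + 5) / 9 := by
  set R : Finset (Fin m) := ({a, b} : Finset (Fin m))ᶜ
  have hR : ∀ c ∈ R, c ≠ a ∧ c ≠ b := by simp [R]
  have hcardR : (R.card : ℝ) = m - 2 := by
    rw [cast_card_compl_pair hab, Fintype.card_fin]
  have hFab : Φ (a, b) (a, b) = m.factorial := by simp [pairCorr_self, Fintype.card_perm]
  have hFba : Φ (a, b) (b, a) = -m.factorial := by
    rw [pairCorr_swap_right _ _ hab, hFab]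
  have hFad : ∀ d ∈ R, Φ (a, b) (a, d) = m.factorial / 3 := fun d hd =>
    pairCorr_full_of_common hab (hR d hd).1.symm (hR d hd).2.symm
  have hFbd : ∀ d ∈ R, Φ (a, b) (b, d) = -(m.factorial / 3) := fun d hd => by
    rw [← pairCorr_full_of_common hab.symm (hR d hd).2.symm (hR d hd).1.symm,
      pairCorr_swap_left _ hab, neg_neg]
  have hFcd : ∀ c ∈ R, ∀ d ∈ R, Φ (a, b) (c, d) = 0 := fun c hc d hd => by
    rcases eq_or_ne c d with rfl | hcd
    · exact pairCorr_full_diag hab c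
    · exact pairCorr_full_of_disjoint hab (hR c hc).1 (hR c hc).2 (hR d hd).1 (hR d hd).2
  have hrow_a : ∑ d, Φ (a, b) (a, d) ^ 2
      = (m.factorial : ℝ) ^ 2 + (m - 2) * (m.factorial / 3) ^ 2 := by
    rw [sum_univ_eq_add_add_sum_compl hab, sum_congr rfl fun d hd => by
      rw [hFad d hd], sum_const, nsmul_eq_mul, hcardR, pairCorr_full_diag hab, hFab]
    ring
  have hrow_b : ∑ d, Φ (a, b) (b, d) ^ 2
      = (m.factorial : ℝ) ^ 2 + (m - 2) * (m.factorial / 3) ^ 2 := by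
    rw [sum_univ_eq_add_add_sum_compl hab, sum_congr rfl fun d hd => by
      rw [hFbd d hd], sum_const, nsmul_eq_mul, hcardR, pairCorr_full_diag hab, hFba]
    ring
  have hrow_c : ∀ c ∈ R, ∑ d, Φ (a, b) (c, d) ^ 2 = 2 * (m.factorial / 3 : ℝ) ^ 2 := fun c hc => by
    rw [sum_univ_eq_add_add_sum_compl hab, sum_congr rfl fun d hd => by
      rw [hFcd c hc d hd, zero_pow two_ne_zero], sq_pairCorr_swap_right _ _ a c,
      sq_pairCorr_swap_right _ _ b c, hFad c hc, hFbd c hc, sum_const_zero]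
    ring
  rw [sum_univ_eq_add_add_sum_compl hab, hrow_a, hrow_b, sum_congr rfl hrow_c, sum_const,
    nsmul_eq_mul, hcardR]
  ring

lemma sum_sq_pairCorr_full {a b : Fin m} (hab : a ≠ b) :
    ∑ q ∈ pairsQ m, Φ (a, b) q ^ 2 = (m.factorial : ℝ) ^ 2 * (2 * m + 5) / 9 := by
  have h := two_mul_sum_filter_lt (fun c d => Φ (a, b) (c, d) ^ 2) fun c d =>
    (sq_pairCorr_swap_right _ _ c d).symm
  simp only [sum_sum_sq_pairCorr_full hab, pairCorr_full_diag hab, ne_eq, OfNat.ofNat_ne_zero,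
    not_false_eq_true, zero_pow, sum_const_zero, sub_zero] at h
  change 2 * ∑ q ∈ pairsQ m, Φ (a, b) q ^ 2 = _ at h
  linarith

end FullDesign

section Kendall
variable {m : ℕ}

/-- The quantity `S(x, y)` above. -/
def zInner (x y : Run m) : ℝ := ∑ p ∈ pairsQ m, zab x p * zab y p

lemma card_pairsQ (m : ℕ) : (pairsQ m).card = m.choose 2 :=
  Fintype.card_product_filter_lt.trans (by rw [Fintype.card_fin])

lemma kendall_eq_card_sub_zInner (x y : Run m) :
    (kendall x y : ℝ) = ((m.choose 2 : ℕ) - zInner x y) / 2 := by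
  rw [kendall_eq_sum, ← card_pairsQ, zInner, ← sum_div, sum_sub_distrib]
  simp

lemma zInner_comm (x y : Run m) : zInner x y = zInner y x :=
  sum_congr rfl fun _ _ => mul_comm _ _

lemma zInner_self (x : Run m) : zInner x x = m.choose 2 := by
  simp [zInner, zab_mul_self, card_pairsQ]

lemma kendall_comm (x y : Run m) : kendall x y = kendall y x := by
  have h := kendall_eq_card_sub_zInner x y
  rw [zInner_comm, ← kendall_eq_card_sub_zInner] at h
  exact_mod_cast h

lemma kendall_self (x : Run m) : kendall x x = 0 := by
  have h := kendall_eq_card_sub_zInner x x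
  rw [zInner_self, sub_self, zero_div] at h
  exact_mod_cast h

variable {n : ℕ}

lemma km2_eq_sum_sum_div (D : Fin n → Run m) :
    km2 D = (∑ i, ∑ j, (kendall (D i) (D j) : ℝ) ^ 2) / (n * (n - 1)) := by
  have h := two_mul_sum_filter_lt (fun i j => (kendall (D i) (D j) : ℝ) ^ 2)
    fun i j => by rw [kendall_comm]
  simp only [kendall_self, CharP.cast_eq_zero, ne_eq, OfNat.ofNat_ne_zero, not_false_eq_true,
    zero_pow, sum_const_zero, sub_zero] at h
  rw [km2, Nat.cast_choose_two, ← h, div_div_eq_mul_div]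
  ring

lemma sum_sum_kendall_sq (D : Fin n → Run m) :
    ∑ i, ∑ j, (kendall (D i) (D j) : ℝ) ^ 2
      = ((n : ℝ) ^ 2 * (m.choose 2 : ℕ) ^ 2
          - 2 * (m.choose 2 : ℕ) * ∑ i, ∑ j, zInner (D i) (D j)
          + ∑ i, ∑ j, zInner (D i) (D j) ^ 2) / 4 := by
  simp only [kendall_eq_card_sub_zInner, div_pow, sub_sq, ← sum_div, sum_add_distrib,
    sum_sub_distrib, ← mul_sum, sum_const, card_univ, Fintype.card_fin, nsmul_eq_mul]
  ring

end Kendall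

section OrthogonalArray
variable {m n : ℕ}

lemma Cwlp_eq_zero_iff (D : Fin n → Run m) (a : ℕ) :
    Cwlp D a = 0 ↔ ∀ W ∈ (pairsQ m).powersetCard a,
      Jchar D W / n = Jchar (fun σ : Run m => σ) W / m.factorial := by
  simp only [Cwlp, sum_eq_zero_iff_of_nonneg fun W _ => sq_nonneg _, sq_eq_zero_iff,
    sub_eq_zero]

lemma Jchar_eq_of_Cwlp_eq_zero {D : Fin n → Run m} (hn : n ≠ 0) {a : ℕ} (h : Cwlp D a = 0)
    {W : Finset (Fin m × Fin m)} (hW : W ∈ (pairsQ m).powersetCard a) :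
    Jchar D W = n / m.factorial * Jchar (fun σ : Run m => σ) W := by
  have := (Cwlp_eq_zero_iff D a).1 h W hW
  field_simp at this ⊢
  linarith

lemma sum_zab_eq_zero_of_Cwlp_one {D : Fin n → Run m} (hn : n ≠ 0) (hC1 : Cwlp D 1 = 0)
    {p : Fin m × Fin m} (hp : p ∈ pairsQ m) : ∑ i, zab (D i) p = 0 := by
  have h := Jchar_eq_of_Cwlp_eq_zero hn hC1 (W := {p}) (by simpa using hp)
  simpa [Jchar, sum_zab_full (mem_filter.1 hp).2.ne] using h

lemma pairCorr_eq_of_Cwlp_two {D : Fin n → Run m} (hn : n ≠ 0) (hC2 : Cwlp D 2 = 0)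
    {p q : Fin m × Fin m} (hp : p ∈ pairsQ m) (hq : q ∈ pairsQ m) :
    pairCorr D p q = n / m.factorial * Φ p q := by
  rcases eq_or_ne p q with rfl | hpq
  · have hfact : (m.factorial : ℝ) ≠ 0 := Nat.cast_ne_zero.2 m.factorial_ne_zero
    rw [pairCorr_self, pairCorr_self, Fintype.card_perm, Fintype.card_fin, Fintype.card_fin]
    field_simp
  · have h := Jchar_eq_of_Cwlp_eq_zero hn hC2 (W := {p, q})
      (mem_powersetCard.2 ⟨by simp [insert_subset_iff, hp, hq], card_pair hpq⟩)
    simpa [Jchar, pairCorr, prod_pair hpq] using h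

lemma sum_sum_zInner_eq_zero {D : Fin n → Run m} (hn : n ≠ 0) (hC1 : Cwlp D 1 = 0) :
    ∑ i, ∑ j, zInner (D i) (D j) = 0 := by
  simp only [zInner]
  rw [sum_sum_sum_mul_eq_sum_sq]
  exact sum_eq_zero fun p hp => by simp [sum_zab_eq_zero_of_Cwlp_one hn hC1 hp]

lemma sum_sum_zInner_sq {D : Fin n → Run m} (hn : n ≠ 0) (hC2 : Cwlp D 2 = 0) :
    ∑ i, ∑ j, zInner (D i) (D j) ^ 2 = (n : ℝ) ^ 2 * (m.choose 2 : ℕ) * (2 * m + 5) / 9 := by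
  simp only [zInner]
  rw [sum_sum_sq_sum_mul_eq]
  have hrow : ∀ p ∈ pairsQ m, ∑ q ∈ pairsQ m, (∑ i, zab (D i) p * zab (D i) q) ^ 2
      = (n : ℝ) ^ 2 * (2 * m + 5) / 9 := fun p hp => by
    have hfact : (m.factorial : ℝ) ≠ 0 := Nat.cast_ne_zero.2 m.factorial_ne_zero
    calc ∑ q ∈ pairsQ m, (∑ i, zab (D i) p * zab (D i) q) ^ 2
        = ∑ q ∈ pairsQ m, (n / m.factorial * Φ (p.1, p.2) q) ^ 2 :=
          sum_congr rfl fun q hq => by rw [← pairCorr_eq_of_Cwlp_two hn hC2 hp hq]; rfl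
      _ = (n / m.factorial) ^ 2 * ∑ q ∈ pairsQ m, Φ (p.1, p.2) q ^ 2 := by
          simp_rw [mul_pow, ← mul_sum]
      _ = (n : ℝ) ^ 2 * (2 * m + 5) / 9 := by
          rw [sum_sq_pairCorr_full (mem_filter.1 hp).2.ne]
          field_simp
  rw [sum_congr rfl hrow, sum_const, card_pairsQ, nsmul_eq_mul]
  ring

end OrthogonalArray

theorem stmt9_general {m n : ℕ} (hn : 2 ≤ n) (D : Fin n → Run m)
    (hC1 : Cwlp D 1 = 0) (hC2 : Cwlp D 2 = 0) :
    km2 D = (n : ℝ) * (m : ℝ) * ((m : ℝ) - 1) *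
        (9 * (m : ℝ) ^ 2 - 5 * (m : ℝ) + 10) / (144 * ((n : ℝ) - 1)) := by
  have hn0 : n ≠ 0 := by omega
  have hn1 : (n : ℝ) - 1 ≠ 0 := by
    have : (2 : ℝ) ≤ n := by exact_mod_cast hn
    linarith
  rw [km2_eq_sum_sum_div, sum_sum_kendall_sq, sum_sum_zInner_eq_zero hn0 hC1,
    sum_sum_zInner_sq hn0 hC2, Nat.cast_choose_two]
  field_simp
  ring

/-- For any design with `C₁(D) = C₂(D) = 0` (in particular, any OofA orthogonal array of
strength 2), the second Kendall tau distance moment attains the full-design benchmark. -/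
theorem stmt9 {m n : ℕ} (hm : 2 ≤ m) (hn : 2 ≤ n) (D : Fin n → Run m)
    (hC1 : Cwlp D 1 = 0) (hC2 : Cwlp D 2 = 0) :
    km2 D = (n : ℝ) * (m : ℝ) * ((m : ℝ) - 1) *
        (9 * (m : ℝ) ^ 2 - 5 * (m : ℝ) + 10) / (144 * ((n : ℝ) - 1)) :=
  stmt9_general hn D hC1 hC2
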